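/- arXiv:1910.00880 — 4 statements merged into one kernel-verified Lean document; each statement's English description precedes it below -/
import Mathlib

section
/- For θ ∈ (0, π), the function w(cos θ) := 1/((cos(θ/3) - 1/2)√(1 + cos(θ/3))) + 1/((cos(θ/3) + 1/2)√(1 - cos(θ/3))) equals (1/(2√2))·(sec((θ-2π)/6)·sec((θ+2π)/6)·sec(θ/6) + sec((θ-π)/6)·sec((θ+π)/6)·csc(θ/6)). -/
open Real

noncomputable def w (x : ℝ) : ℝ :=
  1 / ((Real.cos (Real.arccos x / 3) - 1 / 2) * Real.sqrt (1 + Real.cos (Real.arccos x / 3))) +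
  1 / ((Real.cos (Real.arccos x / 3) + 1 / 2) * Real.sqrt (1 - Real.cos (Real.arccos x / 3)))

/-! With `t = θ / 6` we have `arccos (cos θ) / 3 = 2 t`, the half-angle formulas give
`√(1 ± cos 2t) = √2 · (cos t, sin t)`, and the product-to-sum formula gives
`cos 2t ∓ 1/2 = 2 cos (t ∓ π/3) cos (t ± π/3)` resp. `2 cos (t ∓ π/6) cos (t ± π/6)`.
Substituting these into `w (cos θ)` leaves a field identity. -/

namespace Real

theorem sqrt_one_add_cos_two_mul (x : ℝ) : √(1 + cos (2 * x)) = √2 * |cos x| := by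
  rw [cos_two_mul, show 1 + (2 * cos x ^ 2 - 1) = 2 * cos x ^ 2 by ring,
    sqrt_mul zero_le_two, sqrt_sq_eq_abs]

theorem sqrt_one_sub_cos_two_mul (x : ℝ) : √(1 - cos (2 * x)) = √2 * |sin x| := by
  rw [cos_two_mul, cos_sq', show 1 - (2 * (1 - sin x ^ 2) - 1) = 2 * sin x ^ 2 by ring,
    sqrt_mul zero_le_two, sqrt_sq_eq_abs]

theorem two_mul_cos_sub_mul_cos_add (x y : ℝ) :
    2 * (cos (x - y) * cos (x + y)) = cos (2 * x) + cos (2 * y) := by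
  rw [← mul_assoc, two_mul_cos_mul_cos, show x - y - (x + y) = -(2 * y) by ring,
    show x - y + (x + y) = 2 * x by ring, cos_neg, add_comm]

theorem cos_two_mul_sub_one_half (x : ℝ) :
    cos (2 * x) - 1 / 2 = 2 * (cos (x - π / 3) * cos (x + π / 3)) := by
  rw [two_mul_cos_sub_mul_cos_add, show 2 * (π / 3) = π - π / 3 by ring, cos_pi_sub,
    cos_pi_div_three]
  ring

theorem cos_two_mul_add_one_half (x : ℝ) :
    cos (2 * x) + 1 / 2 = 2 * (cos (x - π / 6) * cos (x + π / 6)) := by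
  rw [two_mul_cos_sub_mul_cos_add, show 2 * (π / 6) = π / 3 by ring, cos_pi_div_three]

end Real

theorem w_cos_eq_sec_csc (θ : ℝ) (hθ : θ ∈ Set.Ioo 0 π) :
    w (Real.cos θ) =
      (1 / (2 * Real.sqrt 2)) *
        ((1 / Real.cos ((θ - 2 * π) / 6)) * (1 / Real.cos ((θ + 2 * π) / 6)) *
            (1 / Real.cos (θ / 6)) +
          (1 / Real.cos ((θ - π) / 6)) * (1 / Real.cos ((θ + π) / 6)) *
            (1 / Real.sin (θ / 6))) := by
  obtain ⟨hθ₀, hθπ⟩ := hθ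
  have hcos : 0 ≤ cos (θ / 6) := cos_nonneg_of_mem_Icc ⟨by linarith [pi_pos], by linarith⟩
  have hsin : 0 ≤ sin (θ / 6) := sin_nonneg_of_nonneg_of_le_pi (by linarith) (by linarith)
  have harg : arccos (cos θ) / 3 = 2 * (θ / 6) := by rw [arccos_cos hθ₀.le hθπ.le]; ring
  rw [w, harg, sqrt_one_add_cos_two_mul, sqrt_one_sub_cos_two_mul, abs_of_nonneg hcos,
    abs_of_nonneg hsin, cos_two_mul_sub_one_half, cos_two_mul_add_one_half,
    show (θ - 2 * π) / 6 = θ / 6 - π / 3 by ring, show (θ + 2 * π) / 6 = θ / 6 + π / 3 by ring,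
    show (θ - π) / 6 = θ / 6 - π / 6 by ring, show (θ + π) / 6 = θ / 6 + π / 6 by ring]
  ring
end

section
/- For all θ ∈ (0, π) with θ ∉ {π/3, 2π/3}, one has w(cos(3θ)) = 1/(|cos θ - 1/2|·√(1 + cos θ)) + 1/(|cos θ + 1/2|·√(1 - cos θ)), where w is defined on (-1,1) by the formula w(x) = 1/((cos(arccos(x)/3) - 1/2)√(1 + cos(arccos(x)/3))) + 1/((cos(arccos(x)/3) + 1/2)√(1 - cos(arccos(x)/3))). -/
/-! Both sides equal `2 / √(1 + cos 3θ) + 2 / √(1 - cos 3θ)`. By the triple-angle formula,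
`(cos t - 1/2)² (1 + cos t) = (1 + cos 3t) / 4` and `(cos t + 1/2)² (1 - cos t) = (1 - cos 3t) / 4`
for every real `t`, which gives the right-hand side at `t = θ`; on the left, `t = arccos x / 3`
lies in `[0, π/3]`, so `cos t ∓ 1/2 ≥ 0` and the absolute values are not needed. -/

open Real

lemma abs_cos_sub_half_mul_sqrt_one_add_cos (t : ℝ) :
    |cos t - 1 / 2| * √(1 + cos t) = √(1 + cos (3 * t)) / 2 := by
  have h : 1 + cos (3 * t) = (2 * (cos t - 1 / 2)) ^ 2 * (1 + cos t) := by
    rw [cos_three_mul]; ring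
  rw [h, sqrt_mul (sq_nonneg _), sqrt_sq_eq_abs, abs_mul, abs_two]
  ring

lemma abs_cos_add_half_mul_sqrt_one_sub_cos (t : ℝ) :
    |cos t + 1 / 2| * √(1 - cos t) = √(1 - cos (3 * t)) / 2 := by
  have h : 1 - cos (3 * t) = (2 * (cos t + 1 / 2)) ^ 2 * (1 - cos t) := by
    rw [cos_three_mul]; ring
  rw [h, sqrt_mul (sq_nonneg _), sqrt_sq_eq_abs, abs_mul, abs_two]
  ring

lemma half_le_cos_arccos_div_three (x : ℝ) : 1 / 2 ≤ cos (arccos x / 3) := by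
  rw [← cos_pi_div_three]
  exact cos_le_cos_of_nonneg_of_le_pi (by linarith [arccos_nonneg x]) (by linarith [pi_pos])
    (by linarith [arccos_le_pi x])

lemma w_eq_of_mem_Icc {x : ℝ} (hx : x ∈ Set.Icc (-1) 1) :
    w x = 2 / √(1 + x) + 2 / √(1 - x) := by
  have hcos : cos (3 * (arccos x / 3)) = x := by
    rw [mul_div_cancel₀ _ three_ne_zero, cos_arccos hx.1 hx.2]
  have hhalf := half_le_cos_arccos_div_three x
  rw [w, ← abs_of_nonneg (sub_nonneg.2 hhalf),
    ← abs_of_nonneg (by linarith : 0 ≤ cos (arccos x / 3) + 1 / 2),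
    abs_cos_sub_half_mul_sqrt_one_add_cos, abs_cos_add_half_mul_sqrt_one_sub_cos, hcos,
    one_div_div, one_div_div]

theorem w_cos_three_theta_general (θ : ℝ) :
    w (Real.cos (3 * θ)) =
      1 / (|Real.cos θ - 1 / 2| * Real.sqrt (1 + Real.cos θ)) +
      1 / (|Real.cos θ + 1 / 2| * Real.sqrt (1 - Real.cos θ)) := by
  rw [w_eq_of_mem_Icc ⟨neg_one_le_cos _, cos_le_one _⟩, abs_cos_sub_half_mul_sqrt_one_add_cos,
    abs_cos_add_half_mul_sqrt_one_sub_cos, one_div_div, one_div_div]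

theorem w_cos_three_theta (θ : ℝ) (hθ : θ ∈ Set.Ioo 0 π) (h1 : θ ≠ π / 3) (h2 : θ ≠ 2 * π / 3) :
    w (Real.cos (3 * θ)) =
      1 / (|Real.cos θ - 1 / 2| * Real.sqrt (1 + Real.cos θ)) +
      1 / (|Real.cos θ + 1 / 2| * Real.sqrt (1 - Real.cos θ)) :=
  w_cos_three_theta_general θ
end

section
/- Let γ₀ := 0 and (γₙ)_{n≥1} be nonzero complex numbers with γ_{3n} + γ_{3n+1} = 1/2 and γ_{3n+2} = 1/4 for all n ≥ 0. Define monic polynomials by P₀ = 1, P₁(x) = x, P_{n+1}(x) = x·Pₙ(x) − γₙ·P_{n-1}(x), and Q₀ = 1, Q₁(x) = x, Q_{n+1}(x) = x·Qₙ(x) − (1/4)γ_{3n-2}γ_{3n}·Q_{n-1}(x). Then for all n ≥ 0: P_{3n}(x) = Qₙ(T̂₃(x)), where T̂₃(x) = x³ − (3/4)x. -/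
/-! Unrolling three steps of the recurrence for `P` gives a recurrence of the same shape for
`P (3 * n)` in the variable `x ^ 3 - (γ (3n+3) + γ (3n+4) + γ (3n+5)) * x`, as long as
`γ (3n+2) = γ (3n+5)`. Every such block of three coefficients sums to `3 / 4`, so that variable
is `T̂₃ x`, and `n ↦ P (3 * n) x`, `n ↦ Q n (T̂₃ x)` solve the same recurrence with the same
initial values. -/

namespace ThreeTermRecurrence

variable {R : Type*} [CommRing R] {x : R} {γ p : ℕ → R}

theorem mul_add_three_sub_mul_add_two
    (hrec : ∀ m, p (m + 2) = x * p (m + 1) - γ (m + 1) * p m) (m : ℕ) :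
    x * p (m + 3) - (x ^ 2 - γ (m + 2)) * p (m + 2) = -(γ (m + 1) * γ (m + 2)) * p m := by
  linear_combination x * hrec (m + 1) + γ (m + 2) * hrec m

theorem add_four_eq (hrec : ∀ m, p (m + 2) = x * p (m + 1) - γ (m + 1) * p m) (m : ℕ) :
    p (m + 4) = (x ^ 3 - (γ (m + 2) + γ (m + 3)) * x) * p (m + 1)
      - γ (m + 1) * (x ^ 2 - γ (m + 3)) * p m := by
  linear_combination hrec (m + 2) + x * hrec (m + 1) + (x ^ 2 - γ (m + 3)) * hrec m

theorem add_six_eq (hrec : ∀ m, p (m + 2) = x * p (m + 1) - γ (m + 1) * p m) {m : ℕ}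
    (hγ : γ (m + 2) = γ (m + 5)) :
    p (m + 6) = (x ^ 3 - (γ (m + 3) + γ (m + 4) + γ (m + 5)) * x) * p (m + 3)
      - γ (m + 1) * γ (m + 2) * γ (m + 3) * p m := by
  linear_combination add_four_eq hrec (m + 2)
    + γ (m + 3) * mul_add_three_sub_mul_add_two hrec m
    - γ (m + 3) * p (m + 2) * hγ

theorem eq_of_three_term_recurrence {f g : ℕ → R} {a : R} {c : ℕ → R}
    (hf : ∀ n, f (n + 2) = a * f (n + 1) - c n * f n)
    (hg : ∀ n, g (n + 2) = a * g (n + 1) - c n * g n)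
    (h0 : f 0 = g 0) (h1 : f 1 = g 1) : f = g := by
  funext n
  induction n using Nat.twoStepInduction with
  | zero => exact h0
  | one => exact h1
  | more n ihn ihn1 => rw [hf, hg, ihn, ihn1]

end ThreeTermRecurrence

open ThreeTermRecurrence

theorem P_three_n_general (γ : ℕ → ℂ) (P Q : ℕ → ℂ → ℂ)
    (hγ0 : γ 0 = 0)
    (hsum : ∀ n : ℕ, γ (3 * n) + γ (3 * n + 1) = 1 / 2)
    (hγ2 : ∀ n : ℕ, γ (3 * n + 2) = 1 / 4)
    (hP0 : ∀ x, P 0 x = 1) (hP1 : ∀ x, P 1 x = x)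
    (hPrec : ∀ n : ℕ, ∀ x, P (n + 2) x = x * P (n + 1) x - γ (n + 1) * P n x)
    (hQ0 : ∀ x, Q 0 x = 1) (hQ1 : ∀ x, Q 1 x = x)
    (hQrec : ∀ n : ℕ, ∀ x,
      Q (n + 2) x = x * Q (n + 1) x - (1 / 4) * γ (3 * n + 1) * γ (3 * n + 3) * Q n x) :
    ∀ n : ℕ, ∀ x : ℂ, P (3 * n) x = Q n (x ^ 3 - (3 / 4) * x) := by
  intro n x
  have hγ1 : γ 1 = 1 / 2 := by simpa [hγ0] using hsum 0
  have hP3 : P 3 x = x ^ 3 - (3 / 4) * x := by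
    rw [hPrec 1, hPrec 0, hP1, hP0, hγ1, hγ2 0]
    ring
  have hPrec3 (n : ℕ) : P (3 * (n + 2)) x = (x ^ 3 - (3 / 4) * x) * P (3 * (n + 1)) x
      - (1 / 4) * γ (3 * n + 1) * γ (3 * n + 3) * P (3 * n) x := by
    have hblock := add_six_eq (p := (P · x)) (hPrec · x) (m := 3 * n)
      ((hγ2 n).trans (hγ2 (n + 1)).symm)
    have hγ5 : γ (3 * n + 5) = 1 / 4 := hγ2 (n + 1)
    have hsum' : γ (3 * n + 3) + γ (3 * n + 4) = 1 / 2 := hsum (n + 1)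
    rw [hγ2 n, hγ5] at hblock
    rw [show 3 * (n + 2) = 3 * n + 6 by ring, show 3 * (n + 1) = 3 * n + 3 by ring, hblock]
    linear_combination -x * P (3 * n + 3) x * hsum'
  refine congrFun (eq_of_three_term_recurrence (f := fun n ↦ P (3 * n) x)
    (g := fun n ↦ Q n (x ^ 3 - (3 / 4) * x)) hPrec3 (hQrec · _) ?_ ?_) n
  · simp [hP0, hQ0]
  · simp [hP3, hQ1]

theorem P_three_n (γ : ℕ → ℂ) (P Q : ℕ → ℂ → ℂ)
    (hγ0 : γ 0 = 0) (hγne : ∀ n : ℕ, 1 ≤ n → γ n ≠ 0)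
    (hsum : ∀ n : ℕ, γ (3 * n) + γ (3 * n + 1) = 1 / 2)
    (hγ2 : ∀ n : ℕ, γ (3 * n + 2) = 1 / 4)
    (hP0 : ∀ x, P 0 x = 1) (hP1 : ∀ x, P 1 x = x)
    (hPrec : ∀ n : ℕ, ∀ x, P (n + 2) x = x * P (n + 1) x - γ (n + 1) * P n x)
    (hQ0 : ∀ x, Q 0 x = 1) (hQ1 : ∀ x, Q 1 x = x)
    (hQrec : ∀ n : ℕ, ∀ x,
      Q (n + 2) x = x * Q (n + 1) x - (1 / 4) * γ (3 * n + 1) * γ (3 * n + 3) * Q n x) :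
    ∀ n : ℕ, ∀ x : ℂ, P (3 * n) x = Q n (x ^ 3 - (3 / 4) * x) :=
  P_three_n_general γ P Q hγ0 hsum hγ2 hP0 hP1 hPrec hQ0 hQ1 hQrec
end

section
/- Under the same hypotheses, for all n ≥ 0: Û₂(x)·P_{3n+1}(x) = Q_{n+1}(T̂₃(x)) + γ_{3n+1}·x·Qₙ(T̂₃(x)), where Û₂(x) = x² − 1/4 and T̂₃(x) = x³ − (3/4)x. -/
/-! Writing `U = x² - 1/4` and `T = x³ - (3/4)x`, three steps of the recurrence for `P` with
`γ_{3n+2} = 1/4` give `P_{3n+3} = U P_{3n+1} - γ_{3n+1} x P_{3n}`. A joint induction then shows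
`P_{3n}(x) = Qₙ(T)` together with the claimed identity for `U P_{3n+1}`: the step for `P_{3n+3}` is
immediate, and the step for `U P_{3n+4}` reduces to the recurrence for `Q_{n+2}` once
`γ_{3n+4} = 1/2 - γ_{3n+3}` is substituted, because `xU = T + x/2` and `U - x² = -1/4`. -/

section
variable {K : Type*} [Field K] [CharZero K] (γ : ℕ → K) (P Q : ℕ → K → K)

theorem P_three_mul_add_three (hγ2 : ∀ n : ℕ, γ (3 * n + 2) = 1 / 4)
    (hPrec : ∀ n : ℕ, ∀ x, P (n + 2) x = x * P (n + 1) x - γ (n + 1) * P n x) (n : ℕ) (x : K) :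
    P (3 * n + 3) x = (x ^ 2 - 1 / 4) * P (3 * n + 1) x - γ (3 * n + 1) * x * P (3 * n) x := by
  have h2 : P (3 * n + 2) x = x * P (3 * n + 1) x - γ (3 * n + 1) * P (3 * n) x := hPrec (3 * n) x
  have h3 : P (3 * n + 3) x = x * P (3 * n + 2) x - γ (3 * n + 2) * P (3 * n + 1) x :=
    hPrec (3 * n + 1) x
  rw [h3, h2, hγ2]
  ring

theorem P_three_mul_and_three_mul_add_one
    (hγ0 : γ 0 = 0) (hsum : ∀ n : ℕ, γ (3 * n) + γ (3 * n + 1) = 1 / 2)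
    (hγ2 : ∀ n : ℕ, γ (3 * n + 2) = 1 / 4)
    (hP0 : ∀ x, P 0 x = 1) (hP1 : ∀ x, P 1 x = x)
    (hPrec : ∀ n : ℕ, ∀ x, P (n + 2) x = x * P (n + 1) x - γ (n + 1) * P n x)
    (hQ0 : ∀ x, Q 0 x = 1) (hQ1 : ∀ x, Q 1 x = x)
    (hQrec : ∀ n : ℕ, ∀ x,
      Q (n + 2) x = x * Q (n + 1) x - (1 / 4) * γ (3 * n + 1) * γ (3 * n + 3) * Q n x)
    (x : K) (n : ℕ) :
    P (3 * n) x = Q n (x ^ 3 - (3 / 4) * x) ∧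
      (x ^ 2 - 1 / 4) * P (3 * n + 1) x =
        Q (n + 1) (x ^ 3 - (3 / 4) * x) + γ (3 * n + 1) * x * Q n (x ^ 3 - (3 / 4) * x) := by
  induction n with
  | zero =>
    have hγ1 : γ 1 = 1 / 2 := by simpa [hγ0] using hsum 0
    refine ⟨by rw [Nat.mul_zero, hP0, hQ0], ?_⟩
    rw [Nat.mul_zero, Nat.zero_add, hP1, hQ1, hQ0, hγ1]
    ring
  | succ n ih =>
    obtain ⟨hP, hUP⟩ := ih
    have hP3 : P (3 * n + 3) x = Q (n + 1) (x ^ 3 - (3 / 4) * x) := by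
      rw [P_three_mul_add_three γ P hγ2 hPrec, hUP, hP]
      ring
    have h2 : P (3 * n + 2) x = x * P (3 * n + 1) x - γ (3 * n + 1) * P (3 * n) x :=
      hPrec (3 * n) x
    have h4 : P (3 * n + 4) x = x * P (3 * n + 3) x - γ (3 * n + 3) * P (3 * n + 2) x :=
      hPrec (3 * n + 2) x
    have hγ4 : γ (3 * n + 4) = 1 / 2 - γ (3 * n + 3) := by linear_combination hsum (n + 1)
    have hQ2 := hQrec n (x ^ 3 - (3 / 4) * x)
    refine ⟨hP3, ?_⟩
    rw [show 3 * (n + 1) + 1 = 3 * n + 4 by ring, show n + 1 + 1 = n + 2 from rfl, h4, hP3, h2, hP, hγ4]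
    linear_combination -γ (3 * n + 3) * x * hUP - hQ2
end

theorem P_three_n_one_general (γ : ℕ → ℂ) (P Q : ℕ → ℂ → ℂ)
    (hγ0 : γ 0 = 0)
    (hsum : ∀ n : ℕ, γ (3 * n) + γ (3 * n + 1) = 1 / 2)
    (hγ2 : ∀ n : ℕ, γ (3 * n + 2) = 1 / 4)
    (hP0 : ∀ x, P 0 x = 1) (hP1 : ∀ x, P 1 x = x)
    (hPrec : ∀ n : ℕ, ∀ x, P (n + 2) x = x * P (n + 1) x - γ (n + 1) * P n x)
    (hQ0 : ∀ x, Q 0 x = 1) (hQ1 : ∀ x, Q 1 x = x)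
    (hQrec : ∀ n : ℕ, ∀ x,
      Q (n + 2) x = x * Q (n + 1) x - (1 / 4) * γ (3 * n + 1) * γ (3 * n + 3) * Q n x) :
    ∀ n : ℕ, ∀ x : ℂ, (x ^ 2 - 1 / 4) * P (3 * n + 1) x =
      Q (n + 1) (x ^ 3 - (3 / 4) * x) + γ (3 * n + 1) * x * Q n (x ^ 3 - (3 / 4) * x) := by
  intro n x
  exact (P_three_mul_and_three_mul_add_one γ P Q hγ0 hsum hγ2 hP0 hP1 hPrec hQ0 hQ1 hQrec x n).2

theorem P_three_n_one (γ : ℕ → ℂ) (P Q : ℕ → ℂ → ℂ)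
    (hγ0 : γ 0 = 0) (hγne : ∀ n : ℕ, 1 ≤ n → γ n ≠ 0)
    (hsum : ∀ n : ℕ, γ (3 * n) + γ (3 * n + 1) = 1 / 2)
    (hγ2 : ∀ n : ℕ, γ (3 * n + 2) = 1 / 4)
    (hP0 : ∀ x, P 0 x = 1) (hP1 : ∀ x, P 1 x = x)
    (hPrec : ∀ n : ℕ, ∀ x, P (n + 2) x = x * P (n + 1) x - γ (n + 1) * P n x)
    (hQ0 : ∀ x, Q 0 x = 1) (hQ1 : ∀ x, Q 1 x = x)
    (hQrec : ∀ n : ℕ, ∀ x,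
      Q (n + 2) x = x * Q (n + 1) x - (1 / 4) * γ (3 * n + 1) * γ (3 * n + 3) * Q n x) :
    ∀ n : ℕ, ∀ x : ℂ, (x ^ 2 - 1 / 4) * P (3 * n + 1) x =
      Q (n + 1) (x ^ 3 - (3 / 4) * x) + γ (3 * n + 1) * x * Q n (x ^ 3 - (3 / 4) * x) :=
  P_three_n_one_general γ P Q hγ0 hsum hγ2 hP0 hP1 hPrec hQ0 hQ1 hQrec
end
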